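/- arXiv:2406.04068 — 5 statements merged into one kernel-verified Lean document; each statement's English description precedes it below -/
import Mathlib

section
/- Every fully calibrated predictor g (i.e. satisfying E[π_{Y|X} | g(X)] = g(X) almost surely) has expected Bregman loss at most that of the constant predictor equal to the marginal label distribution: E[d_φ(π_{Y|X}, g(X))] ≤ E[d_φ(π_{Y|X}, π_Y)]. -/
open MeasureTheory

section aux
variable {α : Type*} {m m0 : MeasurableSpace α} {μ : Measure α}
variable {F G : Type*} [NormedAddCommGroup F] [NormedSpace ℝ F] [CompleteSpace F]
  [NormedAddCommGroup G] [NormedSpace ℝ G] [CompleteSpace G]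

lemma condexp_clm_aux (hm : m ≤ m0) [SigmaFinite (μ.trim hm)] (L : F →L[ℝ] G)
    {f : α → F} (hf : Integrable f μ) :
    (fun ω => L ((μ[f | m]) ω)) =ᵐ[μ] μ[(fun ω => L (f ω)) | m] := by
  refine ae_eq_condExp_of_forall_setIntegral_eq hm (L.integrable_comp hf)
    (fun s _ _ => (L.integrable_comp integrable_condExp).integrableOn)
    (fun s hs _ => ?_) ?_
  · calc ∫ x in s, L ((μ[f | m]) x) ∂μ = L (∫ x in s, (μ[f | m]) x ∂μ) :=
          L.integral_comp_comm integrable_condExp.integrableOn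
      _ = L (∫ x in s, f x ∂μ) := by rw [setIntegral_condExp hm hf hs]
      _ = ∫ x in s, L (f x) ∂μ := (L.integral_comp_comm hf.integrableOn).symm
  · exact StronglyMeasurable.aestronglyMeasurable (L.continuous.comp_stronglyMeasurable stronglyMeasurable_condExp)

lemma norm_le_one_of_mem_stdSimplex {k : ℕ} {x : Fin k → ℝ}
    (hx : x ∈ stdSimplex ℝ (Fin k)) : ‖x‖ ≤ 1 := by
  rw [pi_norm_le_iff_of_nonneg zero_le_one]
  intro i
  rw [Real.norm_eq_abs, abs_le]
  refine ⟨by linarith [hx.1 i], ?_⟩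
  calc x i ≤ ∑ j, x j := Finset.single_le_sum (fun j _ => hx.1 j) (Finset.mem_univ i)
    _ = 1 := hx.2
end aux

/-- **Calibrated predictors beat the constant marginal predictor.** Every fully calibrated
predictor `g` (i.e. `E[π_{Y|X} | g(X)] = g(X)` a.s.) has expected Bregman loss at most that of the
constant predictor equal to the marginal label distribution `π_Y`:
`E[d_φ(π_{Y|X}, g(X))] ≤ E[d_φ(π_{Y|X}, π_Y)]`. -/
theorem calibrated_le_constant_predictor
    {Ω : Type*} [m0 : MeasurableSpace Ω] (μ : Measure Ω) [IsProbabilityMeasure μ]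
    {d k : ℕ}
    (X : Ω → (Fin d → ℝ)) (Y : Ω → Fin k)
    (hX : Measurable X) (hY : Measurable Y)
    (g : (Fin d → ℝ) → (Fin k → ℝ)) (hg : Measurable g)
    (hgs : ∀ x, g x ∈ stdSimplex ℝ (Fin k))
    (φ : (Fin k → ℝ) → ℝ) (Dφ : (Fin k → ℝ) → ((Fin k → ℝ) →L[ℝ] ℝ))
    (hφC1 : ContDiff ℝ 1 φ)
    (hφconv : StrictConvexOn ℝ (stdSimplex ℝ (Fin k)) φ)
    (hDφ : ∀ y, HasFDerivAt φ (Dφ y) y)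
    (dφ : (Fin k → ℝ) → (Fin k → ℝ) → ℝ)
    (hdφ : ∀ x y, dφ x y = φ x - φ y - Dφ y (x - y))
    -- `p` is the conditional label distribution `π_{Y|X}`
    (p : Ω → (Fin k → ℝ))
    (hp : p =ᵐ[μ] μ[(fun ω i => if Y ω = i then (1 : ℝ) else 0) |
      MeasurableSpace.comap X inferInstance])
    -- `πY` is the marginal label distribution
    (πY : Fin k → ℝ)
    (hπY : ∀ i, πY i = (μ {ω | Y ω = i}).toReal)
    -- full calibration of `g`
    (hcal : μ[p | MeasurableSpace.comap (fun ω => g (X ω)) inferInstance]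
      =ᵐ[μ] fun ω => g (X ω)) :
    ∫ ω, dφ (p ω) (g (X ω)) ∂μ ≤ ∫ ω, dφ (p ω) πY ∂μ := by
  classical
  set S := stdSimplex ℝ (Fin k) with hSdef
  set f : Ω → (Fin k → ℝ) := fun ω i => if Y ω = i then (1 : ℝ) else 0 with hfdef
  have hm₁ : MeasurableSpace.comap X inferInstance ≤ m0 := hX.comap_le
  have hm₂ : MeasurableSpace.comap (fun ω => g (X ω)) inferInstance ≤ m0 :=
    (hg.comp hX).comap_le
  set q : Ω → (Fin k → ℝ) := fun ω => g (X ω) with hqdef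
  have hqmeas : Measurable[m0] q := hg.comp hX
  have hqS : ∀ ω, q ω ∈ S := fun ω => hgs (X ω)
  -- basic facts about `f`
  have hfS : ∀ ω, f ω ∈ S := by
    intro ω
    constructor
    · intro i; simp only [hfdef]; split <;> norm_num
    · simp [hfdef, Finset.sum_ite_eq]
  have hfmeas : Measurable[m0] f := by
    apply measurable_pi_lambda
    intro i
    exact Measurable.ite (m := m0) (hY (measurableSet_singleton i)) measurable_const measurable_const
  have hfint : Integrable f μ := by
    refine (integrable_const (1 : ℝ)).mono' hfmeas.aestronglyMeasurable ?_
    filter_upwards with ω using norm_le_one_of_mem_stdSimplex (hfS ω)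
  -- basic facts about `p`
  have hpm : AEStronglyMeasurable p μ :=
    ((stronglyMeasurable_condExp.mono hm₁).aestronglyMeasurable).congr hp.symm
  have hpint : Integrable p μ := integrable_condExp.congr hp.symm
  -- coordinate projections
  set proj : Fin k → ((Fin k → ℝ) →L[ℝ] ℝ) :=
    fun i => ContinuousLinearMap.proj (R := ℝ) (φ := fun _ : Fin k => ℝ) i with hprojdef
  have hproj_apply : ∀ i (x : Fin k → ℝ), proj i x = x i := fun i x => rfl
  have hpcoord : ∀ i, (fun ω => p ω i) =ᵐ[μ] μ[(fun ω => proj i (f ω)) | (MeasurableSpace.comap X inferInstance)] := by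
    intro i
    have h2 := condexp_clm_aux hm₁ (proj i) hfint
    filter_upwards [hp, h2] with ω h1 h2'
    rw [← h2', ← h1]
    exact (hproj_apply i (p ω)).symm
  -- p is a.e. in the simplex
  have hpnonneg : ∀ᵐ ω ∂μ, ∀ i, 0 ≤ p ω i := by
    rw [ae_all_iff]
    intro i
    have hnn : 0 ≤ᵐ[μ] μ[(fun ω => proj i (f ω)) | (MeasurableSpace.comap X inferInstance)] := by
      refine condExp_nonneg ?_
      filter_upwards with ω
      rw [hproj_apply]
      simp only [hfdef, Pi.zero_apply]
      split <;> norm_num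
    filter_upwards [hpcoord i, hnn] with ω h1 h2
    rw [h1]; exact h2
  have hpsum : ∀ᵐ ω ∂μ, ∑ i, p ω i = 1 := by
    set L : (Fin k → ℝ) →L[ℝ] ℝ := ∑ i, proj i with hLdef
    have hL : ∀ x : Fin k → ℝ, L x = ∑ i, x i := by
      intro x; simp [hLdef, ContinuousLinearMap.sum_apply, hproj_apply]
    have h1 := condexp_clm_aux hm₁ L hfint
    have h2 : (fun ω => L (f ω)) = fun _ => (1 : ℝ) := by
      funext ω
      rw [hL]
      exact (hfS ω).2
    have h3 : μ[(fun ω => L (f ω)) | (MeasurableSpace.comap X inferInstance)] = fun _ => (1 : ℝ) := by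
      rw [h2, condExp_const hm₁]
    filter_upwards [hp, h1] with ω e1 e2
    have : L (p ω) = 1 := by
      rw [e1, e2, h3]
    rwa [hL] at this
  have hpS : ∀ᵐ ω ∂μ, p ω ∈ S := by
    filter_upwards [hpnonneg, hpsum] with ω h1 h2
    exact ⟨h1, h2⟩
  have hpbound : ∀ᵐ ω ∂μ, ‖p ω‖ ≤ 1 := by
    filter_upwards [hpS] with ω h using norm_le_one_of_mem_stdSimplex h
  -- integrals of p and q
  have hintp : ∫ ω, p ω ∂μ = πY := by
    have h0 : ∫ ω, p ω ∂μ = ∫ ω, f ω ∂μ := by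
      rw [integral_congr_ae hp, integral_condExp hm₁]
    funext i
    have h1 : (∫ ω, p ω ∂μ) i = ∫ ω, proj i (f ω) ∂μ := by
      rw [h0]
      exact ((proj i).integral_comp_comm hfint).symm
    rw [h1, hπY i]
    have h2 : (fun ω => proj i (f ω)) =
        fun ω => Set.indicator {ω | Y ω = i} (fun _ => (1 : ℝ)) ω := by
      funext ω
      rw [hproj_apply]
      simp only [hfdef, Set.indicator_apply, Set.mem_setOf_eq]
    rw [h2, integral_indicator (show MeasurableSet {ω | Y ω = i} from hY (measurableSet_singleton i)),
      setIntegral_const, smul_eq_mul, mul_one]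
    rfl
  have hqint : Integrable q μ := by
    refine (integrable_const (1 : ℝ)).mono' hqmeas.aestronglyMeasurable ?_
    filter_upwards with ω using norm_le_one_of_mem_stdSimplex (hqS ω)
  have hintq : ∫ ω, q ω ∂μ = πY := by
    calc ∫ ω, q ω ∂μ = ∫ ω, (μ[p | (MeasurableSpace.comap (fun ω => g (X ω)) inferInstance)]) ω ∂μ := (integral_congr_ae hcal).symm
      _ = ∫ ω, p ω ∂μ := integral_condExp hm₂
      _ = πY := hintp
  -- continuity and bounds for φ and Dφ
  have hDeq : Dφ = fderiv ℝ φ := funext fun y => ((hDφ y).fderiv).symm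
  have hDcont : Continuous Dφ := by
    rw [hDeq]; exact hφC1.continuous_fderiv one_ne_zero
  obtain ⟨Cφ, hCφ⟩ := (isCompact_stdSimplex ℝ (Fin k)).exists_bound_of_continuousOn
    hφC1.continuous.continuousOn
  obtain ⟨CD, hCD⟩ := (isCompact_stdSimplex ℝ (Fin k)).exists_bound_of_continuousOn
    hDcont.continuousOn
  have hCD0 : 0 ≤ CD := le_trans (norm_nonneg _) (hCD _ (hgs 0))
  -- integrability of the pieces
  have hφp : Integrable (fun ω => φ (p ω)) μ := by
    refine (integrable_const Cφ).mono'
      (hφC1.continuous.comp_aestronglyMeasurable hpm) ?_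
    filter_upwards [hpS] with ω h using hCφ _ h
  have hφq : Integrable (fun ω => φ (q ω)) μ := by
    refine (integrable_const Cφ).mono'
      (hφC1.continuous.comp_aestronglyMeasurable hqmeas.aestronglyMeasurable) ?_
    filter_upwards with ω using hCφ _ (hqS ω)
  have hC1int : Integrable (fun ω => Dφ πY (p ω - πY)) μ :=
    (Dφ πY).integrable_comp (hpint.sub (integrable_const _))
  have hC2aesm : AEStronglyMeasurable (fun ω => Dφ (q ω) (p ω - q ω)) μ := by
    have hevc : Continuous (fun yx : (Fin k → ℝ) × (Fin k → ℝ) => (Dφ yx.1) (yx.2 - yx.1)) :=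
      isBoundedBilinearMap_apply.continuous.comp
        ((hDcont.comp continuous_fst).prodMk (continuous_snd.sub continuous_fst))
    exact hevc.comp_aestronglyMeasurable (hqmeas.aestronglyMeasurable.prodMk hpm)
  have hC2int : Integrable (fun ω => Dφ (q ω) (p ω - q ω)) μ := by
    refine (integrable_const (CD * 2)).mono' hC2aesm ?_
    filter_upwards [hpbound] with ω hb
    calc ‖Dφ (q ω) (p ω - q ω)‖ ≤ ‖Dφ (q ω)‖ * ‖p ω - q ω‖ :=
          (Dφ (q ω)).le_opNorm _
      _ ≤ CD * 2 := by
          refine mul_le_mul (hCD _ (hqS ω)) ?_ (norm_nonneg _) hCD0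
          calc ‖p ω - q ω‖ ≤ ‖p ω‖ + ‖q ω‖ := norm_sub_le _ _
            _ ≤ 2 := by linarith [norm_le_one_of_mem_stdSimplex (hqS ω), hb]
  -- the constant gradient term vanishes
  have hsubint : Integrable (fun ω => p ω - πY) μ := hpint.sub (integrable_const _)
  have h0 : ∫ ω, (p ω - πY) ∂μ = 0 := by
    have h1 : ∫ ω, (p ω - πY) ∂μ = ∫ ω, p ω ∂μ - ∫ ω, (fun _ => πY) ω ∂μ :=
      integral_sub hpint (integrable_const _)
    rw [h1, hintp, integral_const]
    simp
  have hC1 : ∫ ω, Dφ πY (p ω - πY) ∂μ = 0 := by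
    have h1 : ∫ ω, Dφ πY (p ω - πY) ∂μ = Dφ πY (∫ ω, (p ω - πY) ∂μ) :=
      (Dφ πY).integral_comp_comm hsubint
    rw [h1, h0, map_zero]
  -- the calibration gradient term vanishes
  set e : Fin k → (Fin k → ℝ) := fun i j => if i = j then (1 : ℝ) else 0 with hedef
  have hexp : ∀ (y v : Fin k → ℝ), Dφ y v = ∑ i, v i * Dφ y (e i) := by
    intro y v
    conv_lhs => rw [pi_eq_sum_univ v]
    rw [map_sum]
    congr 1
    funext i
    rw [_root_.map_smul, smul_eq_mul]
  have hqm2 : Measurable[(MeasurableSpace.comap (fun ω => g (X ω)) inferInstance)] q := Measurable.of_comap_le le_rfl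
  have hterm : ∀ i : Fin k, ∫ ω, (p ω i - q ω i) * Dφ (q ω) (e i) ∂μ = 0 := by
    intro i
    set h : Ω → ℝ := fun ω => Dφ (q ω) (e i) with hhdef
    have hGc : Continuous (fun y : Fin k → ℝ => Dφ y (e i)) :=
      isBoundedBilinearMap_apply.continuous.comp (hDcont.prodMk continuous_const)
    have hhm2 : StronglyMeasurable[(MeasurableSpace.comap (fun ω => g (X ω)) inferInstance)] h :=
      (hGc.measurable.comp hqm2).stronglyMeasurable
    have hhb : ∀ ω, ‖h ω‖ ≤ CD * ‖e i‖ := by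
      intro ω
      calc ‖h ω‖ ≤ ‖Dφ (q ω)‖ * ‖e i‖ := (Dφ (q ω)).le_opNorm _
        _ ≤ CD * ‖e i‖ := mul_le_mul_of_nonneg_right (hCD _ (hqS ω)) (norm_nonneg _)
    have hhaesm : AEStronglyMeasurable h μ :=
      ((hhm2.mono hm₂).aestronglyMeasurable)
    have hpiint : Integrable (fun ω => p ω i) μ := (proj i).integrable_comp hpint
    have hqiint : Integrable (fun ω => q ω i) μ := (proj i).integrable_comp hqint
    have hmulp : Integrable (h * fun ω => p ω i) μ :=
      hpiint.bdd_mul hhaesm (Filter.Eventually.of_forall hhb)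
    have hmulp' : Integrable (fun ω => h ω * p ω i) μ := hmulp
    have hqcoord : μ[(fun ω => proj i (p ω)) | (MeasurableSpace.comap (fun ω => g (X ω)) inferInstance)] =ᵐ[μ] fun ω => q ω i := by
      have h1 := condexp_clm_aux hm₂ (proj i) hpint
      filter_upwards [h1, hcal] with ω e1 e2
      rw [← e1, hproj_apply, e2]
    have key : ∫ ω, h ω * p ω i ∂μ = ∫ ω, h ω * q ω i ∂μ := by
      calc ∫ ω, h ω * p ω i ∂μ
          = ∫ ω, (μ[(h * fun ω => p ω i) | (MeasurableSpace.comap (fun ω => g (X ω)) inferInstance)]) ω ∂μ :=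
            (integral_condExp hm₂).symm
        _ = ∫ ω, (h * μ[(fun ω => p ω i) | (MeasurableSpace.comap (fun ω => g (X ω)) inferInstance)]) ω ∂μ := by
            refine integral_congr_ae ?_
            exact condExp_mul_of_stronglyMeasurable_left hhm2 hmulp hpiint
        _ = ∫ ω, h ω * q ω i ∂μ := by
            refine integral_congr_ae ?_
            filter_upwards [hqcoord] with ω e1
            show h ω * (μ[(fun ω => proj i (p ω)) | (MeasurableSpace.comap (fun ω => g (X ω)) inferInstance)]) ω = h ω * q ω i
            rw [e1]
    have hmulq : Integrable (fun ω => h ω * q ω i) μ :=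
      hqiint.bdd_mul hhaesm (Filter.Eventually.of_forall hhb)
    have hsubmul : ∫ ω, (h ω * p ω i - h ω * q ω i) ∂μ
        = ∫ ω, h ω * p ω i ∂μ - ∫ ω, h ω * q ω i ∂μ := integral_sub hmulp' hmulq
    have : ∫ ω, (p ω i - q ω i) * h ω ∂μ
        = ∫ ω, h ω * p ω i ∂μ - ∫ ω, h ω * q ω i ∂μ := by
      rw [← hsubmul]
      refine integral_congr_ae ?_
      filter_upwards with ω
      ring
    rw [this, key, sub_self]
  have hC2 : ∫ ω, Dφ (q ω) (p ω - q ω) ∂μ = 0 := by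
    have hrw : (fun ω => Dφ (q ω) (p ω - q ω))
        = fun ω => ∑ i, (p ω i - q ω i) * Dφ (q ω) (e i) := by
      funext ω
      rw [hexp]
      rfl
    have hsummand : ∀ i : Fin k,
        Integrable (fun ω => (p ω i - q ω i) * Dφ (q ω) (e i)) μ := by
      intro i
      have hGc : Continuous (fun y : Fin k → ℝ => Dφ y (e i)) :=
        isBoundedBilinearMap_apply.continuous.comp (hDcont.prodMk continuous_const)
      have hhaesm : AEStronglyMeasurable (fun ω => Dφ (q ω) (e i)) μ :=
        hGc.comp_aestronglyMeasurable hqmeas.aestronglyMeasurable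
      have h1 : Integrable (fun ω => p ω i - q ω i) μ :=
        ((proj i).integrable_comp hpint).sub ((proj i).integrable_comp hqint)
      have := h1.bdd_mul hhaesm (Filter.Eventually.of_forall fun ω => by
        calc ‖Dφ (q ω) (e i)‖ ≤ ‖Dφ (q ω)‖ * ‖e i‖ := (Dφ (q ω)).le_opNorm _
          _ ≤ CD * ‖e i‖ := mul_le_mul_of_nonneg_right (hCD _ (hqS ω)) (norm_nonneg _))
      refine this.congr ?_
      filter_upwards with ω
      ring
    rw [hrw, integral_finset_sum _ fun i _ => hsummand i]
    exact Finset.sum_eq_zero fun i _ => hterm i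
  -- Jensen's inequality
  have hjensen : φ πY ≤ ∫ ω, φ (q ω) ∂μ := by
    have := hφconv.convexOn.map_integral_le hφC1.continuous.continuousOn
      (isClosed_stdSimplex ℝ (Fin k)) (Filter.Eventually.of_forall hqS) hqint
      (by exact hφq)
    rwa [hintq] at this
  -- put everything together
  have hLHS : ∫ ω, dφ (p ω) (q ω) ∂μ = ∫ ω, φ (p ω) ∂μ - ∫ ω, φ (q ω) ∂μ := by
    have hrw : (fun ω => dφ (p ω) (q ω))
        = fun ω => φ (p ω) - φ (q ω) - Dφ (q ω) (p ω - q ω) := funext fun ω => hdφ _ _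
    have h1 : ∫ ω, (φ (p ω) - φ (q ω) - Dφ (q ω) (p ω - q ω)) ∂μ
        = ∫ ω, (φ (p ω) - φ (q ω)) ∂μ - ∫ ω, Dφ (q ω) (p ω - q ω) ∂μ :=
      integral_sub (hφp.sub hφq) hC2int
    have h2 : ∫ ω, (φ (p ω) - φ (q ω)) ∂μ = ∫ ω, φ (p ω) ∂μ - ∫ ω, φ (q ω) ∂μ :=
      integral_sub hφp hφq
    rw [hrw, h1, h2, hC2, sub_zero]
  have hRHS : ∫ ω, dφ (p ω) πY ∂μ = ∫ ω, φ (p ω) ∂μ - φ πY := by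
    have hrw : (fun ω => dφ (p ω) πY)
        = fun ω => φ (p ω) - φ πY - Dφ πY (p ω - πY) := funext fun ω => hdφ _ _
    have h1 : ∫ ω, (φ (p ω) - φ πY - Dφ πY (p ω - πY)) ∂μ
        = ∫ ω, (φ (p ω) - φ πY) ∂μ - ∫ ω, Dφ πY (p ω - πY) ∂μ :=
      integral_sub (hφp.sub (integrable_const _)) hC1int
    have h2 : ∫ ω, (φ (p ω) - φ πY) ∂μ = ∫ ω, φ (p ω) ∂μ - ∫ ω, (fun _ => φ πY) ω ∂μ :=
      integral_sub hφp (integrable_const _)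
    rw [hrw, h1, h2, hC1, sub_zero, integral_const]
    simp
  rw [hLHS, hRHS]
  linarith
end

section
/- Let π be a distribution on Δ^{k−1} × [k] where the label is deterministic, i.e. there is y*: domain → [k] with π_{Y|X=x}(y*(x)) = 1 a.e., and let ỹ(x) ≠ y*(x) a.e. Define the 'always wrong' predictor g with g^{ỹ(x)}(x) = 1/k + ε and g^y(x) = 1/k − ε/(k−1) for y ≠ ỹ(x), where ε = O(1/k). Then with c(z) = argmax_i z_i and h(z) = max_i z_i, the 1-D Brier loss E[(𝟙_{Y=c(X)} − h(X))²] = O(1/k), while the full Brier loss E[‖π_{Y|X} − g(X)‖²] = Ω(1). -/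
open MeasureTheory

/-- **The always-wrong predictor.** Suppose the label is deterministic (`Y = y*(X)` a.e.), and let
`ỹ(x) ≠ y*(x)` a.e. Define the predictor `g` with `g^{ỹ(x)}(x) = 1/k + ε` and
`g^y(x) = 1/k − ε/(k−1)` for `y ≠ ỹ(x)`, where `0 < ε ≤ 1/k` (so `ε = O(1/k)`). Then with
`c = argmax` and `h = max`, the 1-D Brier loss satisfies
`E[(𝟙_{Y=c(X)} − h(X))²] ≤ 4/k²` (an `O(1/k)` quantity), while the full Brier loss satisfies
`E[‖π_{Y|X} − g(X)‖²] ≥ 1/4` (an `Ω(1)` quantity), where `π_{Y|X}` is the one-hot vector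
`e_{y*(X)}`. -/
theorem always_wrong_predictor
    {Ω : Type*} [m0 : MeasurableSpace Ω] (μ : Measure Ω) [IsProbabilityMeasure μ]
    {α : Type*} [MeasurableSpace α]
    {k : ℕ} (hk : 2 ≤ k)
    (X : Ω → α) (Y : Ω → Fin k) (hX : Measurable X) (hY : Measurable Y)
    (ystar ytil : α → Fin k) (hystar : Measurable ystar) (hytil : Measurable ytil)
    (hdet : ∀ᵐ ω ∂μ, Y ω = ystar (X ω))
    (hwrong : ∀ᵐ ω ∂μ, ytil (X ω) ≠ ystar (X ω))
    (ε : ℝ) (hε0 : 0 < ε) (hεk : ε ≤ 1 / (k : ℝ))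
    (g : α → (Fin k → ℝ))
    (hg : ∀ x i, g x i =
      if i = ytil x then 1 / (k : ℝ) + ε else 1 / (k : ℝ) - ε / ((k : ℝ) - 1))
    (c : (Fin k → ℝ) → Fin k) (h : (Fin k → ℝ) → ℝ)
    (hc : ∀ (z : Fin k → ℝ) (i : Fin k), z i ≤ z (c z)) (hh : ∀ z, h z = z (c z)) :
    (∫ ω, ((if Y ω = c (g (X ω)) then (1 : ℝ) else 0) - h (g (X ω))) ^ 2 ∂μ
        ≤ 4 / (k : ℝ) ^ 2) ∧
    ((1 : ℝ) / 4 ≤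
      ∫ ω, ∑ i, ((if ystar (X ω) = i then (1 : ℝ) else 0) - g (X ω) i) ^ 2 ∂μ) := by
  have hk2 : (2:ℝ) ≤ (k:ℝ) := by exact_mod_cast hk
  have hkpos : (0:ℝ) < (k:ℝ) := by linarith
  have hk1 : (1:ℝ) ≤ (k:ℝ) - 1 := by linarith
  have hεd : 0 < ε / ((k:ℝ) - 1) := by positivity
  -- c always picks ytil
  have hcg : ∀ x, c (g x) = ytil x := by
    intro x
    by_contra hne
    have h1 := hc (g x) (ytil x)
    rw [hg x (ytil x), hg x (c (g x))] at h1
    rw [if_pos rfl, if_neg hne] at h1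
    linarith
  constructor
  · -- first part
    have hae : ∀ᵐ ω ∂μ, ((if Y ω = c (g (X ω)) then (1:ℝ) else 0) - h (g (X ω))) ^ 2
        = (1/(k:ℝ) + ε) ^ 2 := by
      filter_upwards [hdet, hwrong] with ω h1 h2
      have hne : Y ω ≠ c (g (X ω)) := by
        rw [hcg, h1]; exact fun hh' => h2 hh'.symm
      rw [if_neg hne, hh, hcg, hg, if_pos rfl]
      ring
    rw [integral_congr_ae hae, integral_const, probReal_univ]
    simp only [ENNReal.toReal_one, one_smul]
    have h2k : 1/(k:ℝ) + ε ≤ 2/(k:ℝ) := by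
      have : (2:ℝ)/k = 1/k + 1/k := by ring
      linarith
    have hnn : (0:ℝ) ≤ 1/(k:ℝ) + ε := by positivity
    calc (1/(k:ℝ) + ε) ^ 2 ≤ (2/(k:ℝ)) ^ 2 := by nlinarith
      _ = 4 / (k:ℝ) ^ 2 := by ring
  · -- second part
    set f : Ω → ℝ := fun ω => ∑ i, ((if ystar (X ω) = i then (1:ℝ) else 0) - g (X ω) i) ^ 2
      with hf
    have hgb : ∀ x i, |g x i| ≤ 1 := by
      intro x i
      rw [hg]
      split_ifs
      · rw [abs_of_nonneg (by positivity)]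
        have : ε ≤ 1/(k:ℝ) := hεk
        have : (1:ℝ)/k ≤ 1/2 := by
          rw [div_le_div_iff₀ hkpos (by norm_num)]; linarith
        linarith
      · have hb1 : ε / ((k:ℝ) - 1) ≤ ε := by
          rw [div_le_iff₀ (by linarith)]
          nlinarith
        have h0 : (0:ℝ) ≤ 1/(k:ℝ) - ε / ((k:ℝ) - 1) := by linarith
        rw [abs_of_nonneg h0]
        have : (1:ℝ)/k ≤ 1 := by
          rw [div_le_one hkpos]; linarith
        linarith
    have hmeas : Measurable f := by
      apply Finset.measurable_sum
      intro i _
      apply Measurable.pow_const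
      apply Measurable.sub
      · exact Measurable.ite ((hystar.comp hX) (MeasurableSet.singleton i))
          measurable_const measurable_const
      · simp only [hg]
        have : (fun ω => if i = ytil (X ω) then 1/(k:ℝ) + ε else 1/(k:ℝ) - ε/((k:ℝ)-1))
            = fun ω => if ytil (X ω) = i then 1/(k:ℝ) + ε else 1/(k:ℝ) - ε/((k:ℝ)-1) := by
          funext ω; simp [eq_comm]
        rw [this]
        exact Measurable.ite ((hytil.comp hX) (MeasurableSet.singleton i))
          measurable_const measurable_const
    have hbound : ∀ ω, ‖f ω‖ ≤ 4 * k := by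
      intro ω
      have hnn : 0 ≤ f ω := Finset.sum_nonneg fun i _ => sq_nonneg _
      rw [Real.norm_eq_abs, abs_of_nonneg hnn]
      have : f ω ≤ ∑ _i : Fin k, (4:ℝ) := by
        apply Finset.sum_le_sum
        intro i _
        have h1 : |(if ystar (X ω) = i then (1:ℝ) else 0) - g (X ω) i| ≤ 2 := by
          have h2 : |(if ystar (X ω) = i then (1:ℝ) else 0)| ≤ 1 := by
            split_ifs <;> simp
          calc |(if ystar (X ω) = i then (1:ℝ) else 0) - g (X ω) i|
              ≤ |(if ystar (X ω) = i then (1:ℝ) else 0)| + |g (X ω) i| := abs_sub _ _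
            _ ≤ 1 + 1 := add_le_add h2 (hgb _ _)
            _ = 2 := by norm_num
        calc ((if ystar (X ω) = i then (1:ℝ) else 0) - g (X ω) i) ^ 2
            = |(if ystar (X ω) = i then (1:ℝ) else 0) - g (X ω) i| ^ 2 := (sq_abs _).symm
          _ ≤ 2 ^ 2 := by nlinarith [abs_nonneg ((if ystar (X ω) = i then (1:ℝ) else 0) - g (X ω) i)]
          _ = 4 := by norm_num
      simpa [mul_comm] using this
    have hint : Integrable f μ :=
      Integrable.mono' (integrable_const (4 * (k:ℝ)))
        hmeas.aestronglyMeasurable (Filter.Eventually.of_forall hbound)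
    have hae : ∀ᵐ ω ∂μ, (1:ℝ)/4 ≤ f ω := by
      filter_upwards [hwrong] with ω h2
      have hterm : ((if ystar (X ω) = ystar (X ω) then (1:ℝ) else 0)
          - g (X ω) (ystar (X ω))) ^ 2 = (1 - (1/(k:ℝ) - ε/((k:ℝ)-1))) ^ 2 := by
        rw [if_pos rfl, hg, if_neg (fun hh' => h2 hh'.symm)]
      have hle : ((if ystar (X ω) = ystar (X ω) then (1:ℝ) else 0)
          - g (X ω) (ystar (X ω))) ^ 2 ≤ f ω :=
        Finset.single_le_sum
          (f := fun i => ((if ystar (X ω) = i then (1:ℝ) else 0) - g (X ω) i) ^ 2)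
          (fun i _ => sq_nonneg _) (Finset.mem_univ (ystar (X ω)))
      rw [hterm] at hle
      have hb : (1:ℝ)/(k:ℝ) - ε/((k:ℝ)-1) ≤ 1/2 := by
        have : (1:ℝ)/k ≤ 1/2 := by
          rw [div_le_div_iff₀ hkpos (by norm_num)]; linarith
        linarith
      nlinarith
    calc (1:ℝ)/4 = ∫ _ω, (1:ℝ)/4 ∂μ := by simp
      _ ≤ ∫ ω, f ω ∂μ := integral_mono_ae (integrable_const _) hint hae
end

section
/- Suppose φ: Δ^{k−1} → ℝ̄ and ϕ: [0,1] → ℝ̄ are C¹ convex functions whose Bregman divergences satisfy d_φ(x, y) ≥ d_ϕ(x_i, y_i) for every coordinate i ∈ [k]. Let g: ℝ^d → Δ^{k−1}, c(z) = argmax_i z_i, h(z) = max_i z_i. Then almost surely E[d_φ(E[π_{Y|X} | g(X)], g(X)) | h(X)] ≥ d_ϕ(E[𝟙_{Y=c(X)} | h(X)], h(X)). -/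
open MeasureTheory

lemma convexOn_grad_le {E : Type*} [NormedAddCommGroup E] [NormedSpace ℝ E]
    {s : Set E} {f : E → ℝ} (hf : ConvexOn ℝ s f) {x y : E} (hx : x ∈ s) (hy : y ∈ s)
    {f' : E →L[ℝ] ℝ} (hd : HasFDerivAt f f' y) :
    f y + f' (x - y) ≤ f x := by
  set u : ℝ → ℝ := fun t => f (y + t • (x - y)) with hu_def
  have hpath : HasDerivAt (fun t : ℝ => y + t • (x - y)) (x - y) 0 := by
    simpa using ((hasDerivAt_id (0:ℝ)).smul_const (x - y)).const_add y
  have hu : HasDerivAt u (f' (x - y)) 0 := by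
    have hd' : HasFDerivAt f f' (y + (0:ℝ) • (x - y)) := by simpa using hd
    exact hd'.comp_hasDerivAt 0 hpath
  have htend : Filter.Tendsto (slope u 0) (nhdsWithin 0 (Set.Ioi 0)) (nhds (f' (x - y))) :=
    (hasDerivAt_iff_tendsto_slope.mp hu).mono_left
      (nhdsWithin_mono 0 (fun t ht => ne_of_gt ht))
  have hev : ∀ᶠ t in nhdsWithin (0:ℝ) (Set.Ioi 0), slope u 0 t ≤ f x - f y := by
    filter_upwards [Ioc_mem_nhdsGT_of_mem (Set.left_mem_Ico.mpr one_pos)] with t ht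
    have hcomb : y + t • (x - y) = (1 - t) • y + t • x := by
      rw [smul_sub, sub_smul, one_smul]; abel
    have hle : u t ≤ (1 - t) * f y + t * f x := by
      rw [hu_def]; simp only []
      rw [hcomb]
      exact hf.2 hy hx (by linarith [ht.2]) (le_of_lt ht.1) (by ring)
    have hu0 : u 0 = f y := by simp [hu_def]
    rw [slope_def_field, hu0, sub_zero, div_le_iff₀ ht.1]
    nlinarith [ht.1, ht.2]
  have := le_of_tendsto htend hev
  linarith

lemma convexOn_deriv_le {s : Set ℝ} {f : ℝ → ℝ} (hf : ConvexOn ℝ s f) {x y : ℝ}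
    (hx : x ∈ s) (hy : y ∈ s) {f' : ℝ} (hd : HasDerivAt f f' y) :
    f y + f' * (x - y) ≤ f x := by
  have := convexOn_grad_le hf hx hy hd.hasFDerivAt
  simpa [mul_comm] using this

lemma condexp_pi_apply {Ω : Type*} {m m0 : MeasurableSpace Ω} {μ : Measure Ω}
    [IsFiniteMeasure μ] (hm : m ≤ m0) {k : ℕ} {F : Ω → (Fin k → ℝ)}
    (hF : Integrable F μ) (i : Fin k) :
    (fun ω => (μ[F|m]) ω i) =ᵐ[μ] μ[fun ω => F ω i|m] := by
  haveI : SigmaFinite (μ.trim hm) := inferInstance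
  set L : (Fin k → ℝ) →L[ℝ] ℝ := ContinuousLinearMap.proj i with hL
  have hFi : Integrable (fun ω => F ω i) μ := L.integrable_comp hF
  refine ae_eq_condExp_of_forall_setIntegral_eq hm hFi
    (fun s _ _ => (L.integrable_comp integrable_condExp).integrableOn)
    (fun s hs _ => ?_) ?_
  · have h1 : ∫ ω in s, (μ[F|m]) ω i ∂μ = L (∫ ω in s, (μ[F|m]) ω ∂μ) :=
      L.integral_comp_comm integrable_condExp.integrableOn
    have h2 : ∫ ω in s, F ω i ∂μ = L (∫ ω in s, F ω ∂μ) :=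
      L.integral_comp_comm hF.integrableOn
    rw [h1, h2, setIntegral_condExp hm hF hs]
  · exact (L.continuous.comp_stronglyMeasurable
      (stronglyMeasurable_condExp (f := F))).aestronglyMeasurable

/-- **Confidence calibration error lower-bounds full calibration error, conditionally.**
For C¹ convex `φ : Δ^{k−1} → ℝ` and `ϕ : [0,1] → ℝ` whose Bregman divergences satisfy the
coordinatewise domination `d_φ(x, y) ≥ d_ϕ(x_i, y_i)`, for a predictor `g`, classification
function `c = argmax` and confidence function `h = max`, it holds almost surely that
`E[d_φ(E[π_{Y|X} | g(X)], g(X)) | h(X)] ≥ d_ϕ(E[𝟙_{Y=c(X)} | h(X)], h(X))`. -/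
theorem conf_cal_conditional_lower_bound
    {Ω : Type*} [m0 : MeasurableSpace Ω] (μ : Measure Ω) [IsProbabilityMeasure μ]
    {d k : ℕ}
    (X : Ω → (Fin d → ℝ)) (Y : Ω → Fin k) (hX : Measurable X) (hY : Measurable Y)
    (g : (Fin d → ℝ) → (Fin k → ℝ)) (hg : Measurable g)
    (hgs : ∀ x, g x ∈ stdSimplex ℝ (Fin k))
    (c : (Fin k → ℝ) → Fin k) (h : (Fin k → ℝ) → ℝ)
    (hc : ∀ (z : Fin k → ℝ) (i : Fin k), z i ≤ z (c z)) (hh : ∀ z, h z = z (c z))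
    (hcmeas : Measurable[MeasurableSpace.comap (fun ω => g (X ω)) inferInstance]
      (fun ω => c (g (X ω))))
    (φ : (Fin k → ℝ) → ℝ) (Dφ : (Fin k → ℝ) → ((Fin k → ℝ) →L[ℝ] ℝ))
    (ϕ : ℝ → ℝ) (Dϕ : ℝ → ℝ)
    (hφC1 : ContDiff ℝ 1 φ) (hϕC1 : ContDiff ℝ 1 ϕ)
    (hφconv : ConvexOn ℝ (stdSimplex ℝ (Fin k)) φ)
    (hϕconv : ConvexOn ℝ (Set.Icc 0 1) ϕ)
    (hDφ : ∀ y, HasFDerivAt φ (Dφ y) y) (hDϕ : ∀ y, HasDerivAt ϕ (Dϕ y) y)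
    (dφ : (Fin k → ℝ) → (Fin k → ℝ) → ℝ)
    (hdφ : ∀ x y, dφ x y = φ x - φ y - Dφ y (x - y))
    (dϕ : ℝ → ℝ → ℝ)
    (hdϕ : ∀ p q, dϕ p q = ϕ p - ϕ q - Dϕ q * (p - q))
    (hdom : ∀ x ∈ stdSimplex ℝ (Fin k), ∀ y ∈ stdSimplex ℝ (Fin k), ∀ i : Fin k,
      dϕ (x i) (y i) ≤ dφ x y) :
    ∀ᵐ ω ∂μ,
      dϕ ((μ[(fun ω' => if Y ω' = c (g (X ω')) then (1 : ℝ) else 0) |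
            MeasurableSpace.comap (fun ω' => h (g (X ω'))) inferInstance]) ω)
          (h (g (X ω)))
        ≤ (μ[(fun ω' =>
              dφ ((μ[(μ[(fun ω'' i => if Y ω'' = i then (1 : ℝ) else 0) |
                      MeasurableSpace.comap X inferInstance]) |
                    MeasurableSpace.comap (fun ω'' => g (X ω'')) inferInstance]) ω')
                (g (X ω'))) |
            MeasurableSpace.comap (fun ω' => h (g (X ω'))) inferInstance]) ω := by
  classical
  haveI : Nonempty (Fin k) := ⟨c 0⟩
  have hT : Measurable (fun ω => g (X ω)) := hg.comp hX
  -- continuity facts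
  have hϕcont : Continuous ϕ := hϕC1.continuous
  have hDϕeq : Dϕ = deriv ϕ := funext fun y => ((hDϕ y).deriv).symm
  have hDϕcont : Continuous Dϕ := by rw [hDϕeq]; exact hϕC1.continuous_deriv le_rfl
  have hφcont : Continuous φ := hφC1.continuous
  have hDφeq : Dφ = fderiv ℝ φ := funext fun y => ((hDφ y).fderiv).symm
  have hDφcont : Continuous Dφ := by rw [hDφeq]; exact hφC1.continuous_fderiv one_ne_zero
  -- h is continuous hence measurable
  have hh_cont : Continuous h := by
    have hfe : h = fun z => Finset.univ.sup' Finset.univ_nonempty (fun i => z i) := by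
      funext z
      refine le_antisymm ?_ (Finset.sup'_le _ _ fun i _ => (hh z) ▸ hc z i)
      rw [hh]; exact Finset.le_sup' (fun i => z i) (Finset.mem_univ (c z))
    rw [hfe, continuous_iff_continuousAt]
    intro z
    exact ContinuousAt.finset_sup'_apply Finset.univ_nonempty
      (fun i _ => (continuous_apply i).continuousAt)
  have hhm : Measurable h := hh_cont.measurable
  -- indicator functions
  set ind : Ω → (Fin k → ℝ) := fun ω i => if Y ω = i then (1 : ℝ) else 0 with hind_def
  have hindi_meas : ∀ i : Fin k, Measurable (fun ω => if Y ω = i then (1:ℝ) else 0) :=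
    fun i => Measurable.ite (hY (MeasurableSet.singleton i)) measurable_const measurable_const
  have hindi_int : ∀ i : Fin k, Integrable (fun ω => if Y ω = i then (1:ℝ) else 0) μ := by
    intro i
    refine Integrable.mono' (integrable_const (1:ℝ)) (hindi_meas i).aestronglyMeasurable ?_
    refine Filter.Eventually.of_forall fun ω => ?_
    split <;> simp
  have hind_meas : Measurable ind := measurable_pi_lambda _ hindi_meas
  have hind_int : Integrable ind μ := by
    refine Integrable.mono' (integrable_const (1:ℝ)) hind_meas.aestronglyMeasurable ?_
    refine Filter.Eventually.of_forall fun ω => ?_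
    rw [pi_norm_le_iff_of_nonneg zero_le_one]
    intro i
    simp only [hind_def]
    split <;> simp
  -- σ-algebras
  set mX' : MeasurableSpace Ω := MeasurableSpace.comap X inferInstance with hmX'_def
  set mG : MeasurableSpace Ω := MeasurableSpace.comap (fun ω => g (X ω)) inferInstance
    with hmG_def
  set mH : MeasurableSpace Ω := MeasurableSpace.comap (fun ω => h (g (X ω))) inferInstance
    with hmH_def
  have hmX0 : mX' ≤ m0 := hX.comap_le
  have hmG0 : mG ≤ m0 := hT.comap_le
  have hmGX : mG ≤ mX' := by
    rw [hmG_def, hmX'_def]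
    rw [show (fun ω => g (X ω)) = g ∘ X from rfl, ← MeasurableSpace.comap_comp]
    exact MeasurableSpace.comap_mono hg.comap_le
  have hmHG : mH ≤ mG := by
    rw [hmH_def, hmG_def]
    rw [show (fun ω => h (g (X ω))) = h ∘ (fun ω => g (X ω)) from rfl,
      ← MeasurableSpace.comap_comp]
    exact MeasurableSpace.comap_mono hhm.comap_le
  have hmH0 : mH ≤ m0 := hmHG.trans hmG0
  haveI : SigmaFinite (μ.trim hmH0) := inferInstance
  haveI : SigmaFinite (μ.trim hmG0) := inferInstance
  haveI : SigmaFinite (μ.trim hmX0) := inferInstance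
  set πhat : Ω → (Fin k → ℝ) := μ[μ[ind|mX']|mG] with hπ_def
  have hπsm : StronglyMeasurable[mG] πhat := stronglyMeasurable_condExp
  -- coordinates of πhat
  have hcoord : ∀ i : Fin k,
      (fun ω => πhat ω i) =ᵐ[μ] μ[fun ω => if Y ω = i then (1:ℝ) else 0|mG] := by
    intro i
    have h1 := condexp_pi_apply (μ := μ) hmG0 (integrable_condExp (f := ind) (m := mX')) i
    have h2 := condexp_pi_apply (μ := μ) hmX0 hind_int i
    have h3 := condExp_congr_ae (m := mG) h2
    have h4 := condExp_condExp_of_le hmGX hmX0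
      (f := fun ω => if Y ω = i then (1:ℝ) else 0) (μ := μ)
    exact h1.trans (h3.trans h4)
  -- πhat lands in the simplex a.e.
  have hπ_simplex : ∀ᵐ ω ∂μ, πhat ω ∈ stdSimplex ℝ (Fin k) := by
    have hnn : ∀ᵐ ω ∂μ, ∀ i : Fin k, 0 ≤ πhat ω i := by
      rw [MeasureTheory.ae_all_iff]
      intro i
      filter_upwards [hcoord i, condExp_nonneg (m := mG) (μ := μ)
          (f := fun ω => if Y ω = i then (1:ℝ) else 0)
          (Filter.Eventually.of_forall fun ω => by
            simp only [Pi.zero_apply]; split <;> norm_num)] with ω e1 e2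
      rw [e1]; exact e2
    have hsum1 : μ[(fun _ : Ω => (1:ℝ))|mG] =ᵐ[μ]
        ∑ i : Fin k, μ[fun ω => if Y ω = i then (1:ℝ) else 0|mG] := by
      have hs := condExp_finsetSum (μ := μ) (m := mG) (s := (Finset.univ : Finset (Fin k)))
        (f := fun i ω => if Y ω = i then (1:ℝ) else 0) (fun i _ => hindi_int i)
      have he : (∑ i : Fin k, fun ω => if Y ω = i then (1:ℝ) else 0) = fun _ : Ω => (1:ℝ) := by
        funext ω; rw [Finset.sum_apply]; simp
      rwa [he] at hs
    have hcoords : ∀ᵐ ω ∂μ, ∀ i : Fin k,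
        πhat ω i = (μ[fun ω' => if Y ω' = i then (1:ℝ) else 0|mG]) ω := by
      rw [MeasureTheory.ae_all_iff]; intro i
      exact hcoord i
    filter_upwards [hnn, hcoords, hsum1] with ω e1 e2 e3
    refine ⟨e1, ?_⟩
    have : ∑ i : Fin k, πhat ω i
        = (∑ i : Fin k, μ[fun ω' => if Y ω' = i then (1:ℝ) else 0|mG]) ω := by
      rw [Finset.sum_apply]
      exact Finset.sum_congr rfl fun i _ => e2 i
    rw [this, ← e3]
    rw [condExp_const hmG0]
  -- coordinates of simplex elements lie in [0,1]
  have hcoord01 : ∀ z ∈ stdSimplex ℝ (Fin k), ∀ i : Fin k, z i ∈ Set.Icc (0:ℝ) 1 := by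
    intro z hz i
    refine ⟨hz.1 i, ?_⟩
    calc z i ≤ ∑ j, z j := Finset.single_le_sum (fun j _ => hz.1 j) (Finset.mem_univ i)
    _ = 1 := hz.2
  -- χ indicators of the argmax
  have hχ_meas : ∀ i : Fin k, Measurable[mG] (fun ω => if c (g (X ω)) = i then (1:ℝ) else 0) := by
    intro i
    exact Measurable.ite (hcmeas (MeasurableSet.singleton i)) measurable_const measurable_const
  have hπi_meas : ∀ i : Fin k, Measurable[mG] (fun ω => πhat ω i) := fun i =>
    (measurable_pi_apply i).comp hπsm.measurable
  have hZeq : (fun ω => πhat ω (c (g (X ω))))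
      = fun ω => ∑ i : Fin k, (if c (g (X ω)) = i then (1:ℝ) else 0) * πhat ω i := by
    funext ω
    simp [ite_mul]
  have hZmeas : Measurable[mG] (fun ω => πhat ω (c (g (X ω)))) := by
    rw [hZeq]
    exact Finset.measurable_sum _ fun i _ => ((hχ_meas i).mul (hπi_meas i))
  -- integrability of the products
  have hprod_int : ∀ i : Fin k, Integrable
      ((fun ω => if c (g (X ω)) = i then (1:ℝ) else 0)
        * (fun ω => if Y ω = i then (1:ℝ) else 0)) μ := by
    intro i
    refine Integrable.mono' (integrable_const (1:ℝ))
      ((((hχ_meas i).mono hmG0 le_rfl).mul (hindi_meas i)).aestronglyMeasurable) ?_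
    refine Filter.Eventually.of_forall fun ω => ?_
    simp only [Pi.mul_apply]
    split <;> split <;> simp
  have hindc_meas : Measurable[m0] (fun ω => if Y ω = c (g (X ω)) then (1:ℝ) else 0) := by
    have hcm0 : Measurable[m0] (fun ω => c (g (X ω))) := hcmeas.mono hmG0 le_rfl
    exact Measurable.ite (measurableSet_eq_fun hY hcm0)
      measurable_const measurable_const
  have hindc_int : Integrable (fun ω => if Y ω = c (g (X ω)) then (1:ℝ) else 0) μ := by
    refine Integrable.mono' (integrable_const (1:ℝ)) hindc_meas.aestronglyMeasurable ?_
    exact Filter.Eventually.of_forall fun ω => by split <;> simp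
  -- pull-out property
  have hdecomp : (fun ω => if Y ω = c (g (X ω)) then (1:ℝ) else 0)
      = ∑ i : Fin k, (fun ω => if c (g (X ω)) = i then (1:ℝ) else 0)
          * (fun ω => if Y ω = i then (1:ℝ) else 0) := by
    funext ω
    rw [Finset.sum_apply]
    simp only [Pi.mul_apply]
    simp [ite_mul, eq_comm]
  have hZcond : μ[(fun ω => if Y ω = c (g (X ω)) then (1:ℝ) else 0)|mG]
      =ᵐ[μ] fun ω => πhat ω (c (g (X ω))) := by
    have hs : μ[(fun ω => if Y ω = c (g (X ω)) then (1:ℝ) else 0)|mG]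
        =ᵐ[μ] ∑ i : Fin k, μ[(fun ω => if c (g (X ω)) = i then (1:ℝ) else 0)
            * (fun ω => if Y ω = i then (1:ℝ) else 0)|mG] := by
      rw [hdecomp]
      exact condExp_finsetSum (fun i _ => hprod_int i) mG
    have hmul : ∀ i : Fin k, μ[(fun ω => if c (g (X ω)) = i then (1:ℝ) else 0)
          * (fun ω => if Y ω = i then (1:ℝ) else 0)|mG]
        =ᵐ[μ] (fun ω => if c (g (X ω)) = i then (1:ℝ) else 0)
          * μ[(fun ω => if Y ω = i then (1:ℝ) else 0)|mG] :=
      fun i => condExp_mul_of_stronglyMeasurable_left ((hχ_meas i).stronglyMeasurable)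
        (hprod_int i) (hindi_int i)
    have hae1 : ∀ᵐ ω ∂μ, ∀ i : Fin k,
        (μ[(fun ω' => if c (g (X ω')) = i then (1:ℝ) else 0)
          * (fun ω' => if Y ω' = i then (1:ℝ) else 0)|mG]) ω
        = ((fun ω' => if c (g (X ω')) = i then (1:ℝ) else 0)
          * μ[(fun ω' => if Y ω' = i then (1:ℝ) else 0)|mG]) ω := ae_all_iff.2 hmul
    have hae2 : ∀ᵐ ω ∂μ, ∀ i : Fin k,
        πhat ω i = (μ[fun ω' => if Y ω' = i then (1:ℝ) else 0|mG]) ω := ae_all_iff.2 hcoord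
    filter_upwards [hs, hae1, hae2] with ω e1 e2 e3
    rw [e1, Finset.sum_apply]
    have : ∀ i : Fin k, (μ[(fun ω' => if c (g (X ω')) = i then (1:ℝ) else 0)
          * (fun ω' => if Y ω' = i then (1:ℝ) else 0)|mG]) ω
        = (if c (g (X ω)) = i then (1:ℝ) else 0) * πhat ω i := by
      intro i
      rw [e2 i, Pi.mul_apply, ← e3 i]
    rw [Finset.sum_congr rfl fun i _ => this i]
    simp [ite_mul]
  -- tower property
  have htowerZ : μ[(fun ω => πhat ω (c (g (X ω))))|mH]
      =ᵐ[μ] μ[(fun ω => if Y ω = c (g (X ω)) then (1:ℝ) else 0)|mH] :=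
    (condExp_congr_ae hZcond.symm).trans (condExp_condExp_of_le hmHG hmG0)
  -- confidence values lie in [0,1]
  have hq01 : ∀ ω, h (g (X ω)) ∈ Set.Icc (0:ℝ) 1 := fun ω => by
    rw [hh]; exact hcoord01 _ (hgs (X ω)) _
  have hq_meas : Measurable[mH] (fun ω => h (g (X ω))) :=
    Measurable.of_comap_le (le_of_eq hmH_def.symm)
  -- the confidence-conditional correctness probability
  set phat : Ω → ℝ := μ[(fun ω => if Y ω = c (g (X ω)) then (1:ℝ) else 0)|mH] with hphat_def
  have hp0 : 0 ≤ᵐ[μ] phat :=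
    condExp_nonneg (Filter.Eventually.of_forall fun ω => by
      by_cases hb : Y ω = c (g (X ω)) <;> simp [hb])
  have hp1 : phat ≤ᵐ[μ] fun _ => (1:ℝ) := by
    have := condExp_mono (m := mH) hindc_int (integrable_const (1:ℝ))
      (Filter.Eventually.of_forall fun ω => by
        by_cases hb : Y ω = c (g (X ω)) <;> simp [hb])
    rwa [condExp_const hmH0] at this
  -- compactness bounds
  have hdϕcont : Continuous (fun pq : ℝ × ℝ => dϕ pq.1 pq.2) := by
    have he : (fun pq : ℝ × ℝ => dϕ pq.1 pq.2)
        = fun pq => ϕ pq.1 - ϕ pq.2 - Dϕ pq.2 * (pq.1 - pq.2) := by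
      funext pq; rw [hdϕ]
    rw [he]
    exact ((hϕcont.comp continuous_fst).sub (hϕcont.comp continuous_snd)).sub
      ((hDϕcont.comp continuous_snd).mul (continuous_fst.sub continuous_snd))
  obtain ⟨Cϕ, hCϕ⟩ := IsCompact.exists_bound_of_continuousOn
    (isCompact_Icc.prod isCompact_Icc :
      IsCompact (Set.Icc (0:ℝ) 1 ×ˢ Set.Icc (0:ℝ) 1)) hdϕcont.continuousOn
  have hdφcont : Continuous (fun xy : (Fin k → ℝ) × (Fin k → ℝ) => dφ xy.1 xy.2) := by
    have he : (fun xy : (Fin k → ℝ) × (Fin k → ℝ) => dφ xy.1 xy.2)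
        = fun xy => φ xy.1 - φ xy.2 - (Dφ xy.2) (xy.1 - xy.2) := by
      funext xy; rw [hdφ]
    rw [he]
    exact ((hφcont.comp continuous_fst).sub (hφcont.comp continuous_snd)).sub
      ((hDφcont.comp continuous_snd).clm_apply (continuous_fst.sub continuous_snd))
  obtain ⟨Cφ, hCφ⟩ := IsCompact.exists_bound_of_continuousOn
    ((isCompact_stdSimplex (𝕜 := ℝ) (ι := Fin k)).prod (isCompact_stdSimplex (𝕜 := ℝ) (ι := Fin k)))
    hdφcont.continuousOn
  obtain ⟨CD, hCD⟩ := IsCompact.exists_bound_of_continuousOn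
    (isCompact_Icc : IsCompact (Set.Icc (0:ℝ) 1)) hDϕcont.continuousOn
  -- integrability of the full calibration error
  have hπ_aesm : AEStronglyMeasurable[m0] πhat μ := (hπsm.mono hmG0).aestronglyMeasurable
  have hF2_aesm : AEStronglyMeasurable[m0] (fun ω => dφ (πhat ω) (g (X ω))) μ :=
    hdφcont.comp_aestronglyMeasurable (hπ_aesm.prodMk hT.aestronglyMeasurable)
  have hF2_int : Integrable (fun ω => dφ (πhat ω) (g (X ω))) μ := by
    refine Integrable.mono' (integrable_const Cφ) hF2_aesm ?_
    filter_upwards [hπ_simplex] with ω hω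
    exact hCφ (πhat ω, g (X ω)) ⟨hω, hgs (X ω)⟩
  -- Z facts
  have hZ01 : ∀ᵐ ω ∂μ, πhat ω (c (g (X ω))) ∈ Set.Icc (0:ℝ) 1 := by
    filter_upwards [hπ_simplex] with ω hω
    exact hcoord01 _ hω _
  have hZ_int : Integrable (fun ω => πhat ω (c (g (X ω)))) μ := by
    refine Integrable.mono' (integrable_const (1:ℝ))
      ((hZmeas.mono hmG0 le_rfl).aestronglyMeasurable) ?_
    filter_upwards [hZ01] with ω hω
    rw [Real.norm_eq_abs, abs_le]
    exact ⟨by linarith [hω.1], hω.2⟩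
  -- the conditional Bregman term
  have hA_sm : StronglyMeasurable[mH] (fun ω => dϕ (phat ω) (h (g (X ω)))) :=
    hdϕcont.comp_stronglyMeasurable
      (stronglyMeasurable_condExp.prodMk hq_meas.stronglyMeasurable)
  have hA_int : Integrable (fun ω => dϕ (phat ω) (h (g (X ω)))) μ := by
    refine Integrable.mono' (integrable_const Cϕ) ((hA_sm.mono hmH0).aestronglyMeasurable) ?_
    filter_upwards [hp0, hp1] with ω h0 h1
    exact hCϕ (phat ω, h (g (X ω))) ⟨⟨h0, h1⟩, hq01 ω⟩
  -- the subgradient multiplier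
  set W : Ω → ℝ := fun ω => Dϕ (phat ω) - Dϕ (h (g (X ω))) with hW_def
  have hW_sm : StronglyMeasurable[mH] W :=
    (hDϕcont.comp_stronglyMeasurable stronglyMeasurable_condExp).sub
      (hDϕcont.comp_stronglyMeasurable hq_meas.stronglyMeasurable)
  have hW_bdd : ∀ᵐ ω ∂μ, |W ω| ≤ CD + CD := by
    filter_upwards [hp0, hp1] with ω h0 h1
    have b1 := hCD (phat ω) ⟨h0, h1⟩
    have b2 := hCD (h (g (X ω))) (hq01 ω)
    rw [Real.norm_eq_abs] at b1 b2
    calc |W ω| ≤ |Dϕ (phat ω)| + |Dϕ (h (g (X ω)))| := abs_sub _ _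
    _ ≤ CD + CD := by linarith
  set B : Ω → ℝ := W * ((fun ω => πhat ω (c (g (X ω)))) - phat) with hB_def
  have hZp_int : Integrable ((fun ω => πhat ω (c (g (X ω)))) - phat) μ :=
    hZ_int.sub integrable_condExp
  have hB_aesm : AEStronglyMeasurable[m0] B μ :=
    ((hW_sm.mono hmH0).aestronglyMeasurable).mul hZp_int.aestronglyMeasurable
  have hB_int : Integrable B μ := by
    refine Integrable.mono' (integrable_const ((CD + CD) * 2)) hB_aesm ?_
    filter_upwards [hW_bdd, hZ01, hp0, hp1] with ω e1 e2 e3 e4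
    have h2 : |πhat ω (c (g (X ω))) - phat ω| ≤ 2 := by
      rw [abs_le]
      constructor <;> [linarith [e2.1, e2.2, e3, e4, hp1]; skip]
      have := e2.2
      have h3 : (0:ℝ) ≤ phat ω := e3
      linarith [e2.1]
    rw [hB_def]
    simp only [Pi.mul_apply, Pi.sub_apply, Real.norm_eq_abs]
    rw [abs_mul]
    exact mul_le_mul e1 h2 (abs_nonneg _) (le_trans (abs_nonneg _) e1)
  -- the key pointwise inequality
  have hkey : (fun ω => dϕ (phat ω) (h (g (X ω)))) + B
      ≤ᵐ[μ] fun ω => dφ (πhat ω) (g (X ω)) := by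
    filter_upwards [hp0, hp1, hπ_simplex] with ω e0 e1 eS
    have hZmem : πhat ω (c (g (X ω))) ∈ Set.Icc (0:ℝ) 1 := hcoord01 _ eS _
    have hpmem : phat ω ∈ Set.Icc (0:ℝ) 1 := ⟨e0, e1⟩
    have hgrad := convexOn_deriv_le hϕconv hZmem hpmem (hDϕ (phat ω))
    have hj : dϕ (phat ω) (h (g (X ω))) + W ω * (πhat ω (c (g (X ω))) - phat ω)
        ≤ dϕ (πhat ω (c (g (X ω)))) (h (g (X ω))) := by
      rw [hdϕ, hdϕ]
      simp only [hW_def]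
      nlinarith [hgrad]
    have hd2 : dϕ (πhat ω (c (g (X ω)))) (h (g (X ω))) ≤ dφ (πhat ω) (g (X ω)) := by
      rw [hh]
      exact hdom _ eS _ (hgs (X ω)) _
    simp only [Pi.add_apply, hB_def, Pi.mul_apply, Pi.sub_apply]
    linarith
  -- conditional monotonicity
  have hmono := condExp_mono (m := mH) (hA_int.add hB_int) hF2_int hkey
  have hsplit := condExp_add (μ := μ) (m := mH) hA_int hB_int
  have hAfix : μ[(fun ω => dϕ (phat ω) (h (g (X ω))))|mH]
      = fun ω => dϕ (phat ω) (h (g (X ω))) :=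
    condExp_of_stronglyMeasurable hmH0 hA_sm hA_int
  have hBmul := condExp_mul_of_stronglyMeasurable_left hW_sm
    (by rw [← hB_def]; exact hB_int) hZp_int
  have hsub := condExp_sub (μ := μ) (m := mH) (f := fun ω => πhat ω (c (g (X ω)))) (g := phat) hZ_int integrable_condExp
  have hpfix : μ[phat|mH] = phat :=
    condExp_of_stronglyMeasurable hmH0 stronglyMeasurable_condExp integrable_condExp
  filter_upwards [hmono, hsplit, hBmul, hsub, htowerZ] with ω m1 m2 m3 m4 m5
  have hcalc : (μ[(fun ω' => dϕ (phat ω') (h (g (X ω')))) + B|mH]) ω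
      = dϕ (phat ω) (h (g (X ω))) := by
    rw [m2, Pi.add_apply, hAfix]
    have hB0 : (μ[B|mH]) ω = 0 := by
      rw [hB_def]
      rw [m3, Pi.mul_apply, m4, Pi.sub_apply, m5, hpfix]
      simp
    rw [hB0, add_zero]
  rw [← hcalc]
  exact m1
end

section
/- For a C¹ convex ϕ: [0,1] → ℝ̄, random variables with σ(h(X)) ⊆ σ(g(X)): E[d_ϕ(E[𝟙_{Y=c(X)} | g(X)], h(X)) | h(X)] ≥ d_ϕ(E[𝟙_{Y=c(X)} | h(X)], h(X)) almost surely. -/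
/-! `d_ϕ(p, q)` is `ϕ p` minus the tangent line of `ϕ` at `q`, evaluated at `p`. Given `σ(h(X))`,
the point `q = h(X)` is known, so the tangent-line term is affine in `p` with measurable
coefficients and commutes with the conditional expectation; what is left,
`ϕ(E[Z | h(X)]) ≤ E[ϕ(Z) | h(X)]`, is conditional Jensen. Apply this to
`Z = E[𝟙_{Y=c(X)} | g(X)] ∈ [0,1]` and collapse `E[Z | h(X)]` by the tower property. -/

open MeasureTheory Set

noncomputable def bregmanDiv (ϕ ϕ' : ℝ → ℝ) (p q : ℝ) : ℝ := ϕ p - ϕ q - ϕ' q * (p - q)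

lemma ConvexOn.exists_bound_of_hasDerivAt {ϕ ϕ' : ℝ → ℝ} {a b : ℝ}
    (hconv : ConvexOn ℝ (Icc a b) ϕ) (hϕ : ∀ x, HasDerivAt ϕ (ϕ' x) x) :
    ∃ C, ∀ x ∈ Icc a b, ‖ϕ' x‖ ≤ C := by
  have hϕ' : ϕ' = deriv ϕ := funext fun x => (hϕ x).deriv.symm
  have hmono : MonotoneOn ϕ' (Icc a b) :=
    hϕ' ▸ hconv.monotoneOn_deriv fun x _ => (hϕ x).differentiableAt
  refine ⟨max |ϕ' a| |ϕ' b|, fun x hx => abs_le_max_abs_abs ?_ ?_⟩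
  · exact hmono (left_mem_Icc.2 (hx.1.trans hx.2)) hx hx.1
  · exact hmono hx (right_mem_Icc.2 (hx.1.trans hx.2)) hx.2

section

variable {Ω : Type*} {m m0 : MeasurableSpace Ω} {μ : Measure Ω}

lemma integrable_comp_of_ae_mem_isCompact [IsFiniteMeasure μ] {f : ℝ → ℝ} (hf : Continuous f)
    {s : Set ℝ} (hs : IsCompact s) {Z : Ω → ℝ} (hZ : AEStronglyMeasurable Z μ)
    (hZs : ∀ᵐ ω ∂μ, Z ω ∈ s) : Integrable (f ∘ Z) μ := by
  obtain ⟨C, hC⟩ := hs.exists_bound_of_continuousOn hf.continuousOn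
  exact .of_bound (hf.comp_aestronglyMeasurable hZ) C (hZs.mono fun ω hω => hC _ hω)

lemma condExp_add_mul_sub_of_stronglyMeasurable (hm : m ≤ m0) [IsFiniteMeasure μ]
    {A B C Z : Ω → ℝ} (hA : StronglyMeasurable[m] A) (hAi : Integrable A μ)
    (hB : StronglyMeasurable[m] B) {c : ℝ} (hBc : ∀ᵐ ω ∂μ, ‖B ω‖ ≤ c)
    (hC : StronglyMeasurable[m] C) (hCi : Integrable C μ) (hZ : Integrable Z μ) :
    μ[A + B * (Z - C) | m] =ᵐ[μ] A + B * (μ[Z | m] - C) := by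
  have hBZC : Integrable (B * (Z - C)) μ :=
    (hZ.sub hCi).bdd_mul (hB.mono hm).aestronglyMeasurable hBc
  have hsub : μ[Z - C | m] =ᵐ[μ] μ[Z | m] - C := by
    filter_upwards [condExp_sub hZ hCi m] with ω hω
    rw [hω, Pi.sub_apply, Pi.sub_apply, condExp_of_stronglyMeasurable hm hC hCi]
  filter_upwards [condExp_add hAi hBZC m,
    condExp_stronglyMeasurable_mul_of_bound hm hB (hZ.sub hCi) c hBc, hsub] with ω hadd hmul hω
  rw [hadd, Pi.add_apply, condExp_of_stronglyMeasurable hm hA hAi, hmul, Pi.mul_apply, hω]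
  rfl

lemma ConvexOn.ae_bregmanDiv_condExp_le (hm : m ≤ m0) [IsFiniteMeasure μ] {ϕ ϕ' : ℝ → ℝ}
    {a b : ℝ} (hconv : ConvexOn ℝ (Icc a b) ϕ) (hϕ : ∀ x, HasDerivAt ϕ (ϕ' x) x)
    {Z H : Ω → ℝ} (hZ : Integrable Z μ) (hZab : ∀ᵐ ω ∂μ, Z ω ∈ Icc a b)
    (hH : StronglyMeasurable[m] H) (hHab : ∀ᵐ ω ∂μ, H ω ∈ Icc a b) :
    ∀ᵐ ω ∂μ, bregmanDiv ϕ ϕ' (μ[Z | m] ω) (H ω) ≤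
      μ[fun ω => bregmanDiv ϕ ϕ' (Z ω) (H ω) | m] ω := by
  have hϕc : Continuous ϕ := continuous_iff_continuousAt.2 fun x => (hϕ x).continuousAt
  have hϕ'H : StronglyMeasurable[m] (ϕ' ∘ H) := by
    rw [funext fun x => (hϕ x).deriv.symm]
    exact ((measurable_deriv ϕ).comp hH.measurable).stronglyMeasurable
  obtain ⟨c, hc⟩ := hconv.exists_bound_of_hasDerivAt hϕ
  have hϕ'Hc : ∀ᵐ ω ∂μ, ‖(ϕ' ∘ H) ω‖ ≤ c := hHab.mono fun ω hω => hc _ hω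
  have hHi : Integrable H μ := by
    simpa using integrable_comp_of_ae_mem_isCompact continuous_id isCompact_Icc
      (hH.mono hm).aestronglyMeasurable hHab
  have hϕZ : Integrable (ϕ ∘ Z) μ :=
    integrable_comp_of_ae_mem_isCompact hϕc isCompact_Icc hZ.aestronglyMeasurable hZab
  have hϕH : Integrable (ϕ ∘ H) μ :=
    integrable_comp_of_ae_mem_isCompact hϕc isCompact_Icc (hH.mono hm).aestronglyMeasurable hHab
  have htangent : Integrable (ϕ ∘ H + (ϕ' ∘ H) * (Z - H)) μ :=
    hϕH.add ((hZ.sub hHi).bdd_mul (hϕ'H.mono hm).aestronglyMeasurable hϕ'Hc)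
  have hsplit : (fun ω => bregmanDiv ϕ ϕ' (Z ω) (H ω)) =
      ϕ ∘ Z - (ϕ ∘ H + (ϕ' ∘ H) * (Z - H)) := by
    funext ω
    simp only [bregmanDiv, sub_sub, Pi.add_apply, Pi.mul_apply, Pi.sub_apply, Function.comp_apply]
  rw [hsplit]
  filter_upwards [hconv.map_condExp_le hm hϕc.continuousOn.lowerSemicontinuousOn hZab
      isClosed_Icc hZ hϕZ, condExp_sub hϕZ htangent m,
    condExp_add_mul_sub_of_stronglyMeasurable (A := ϕ ∘ H) hm (hϕc.comp_stronglyMeasurable hH)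
      hϕH hϕ'H hϕ'Hc hH hHi hZ] with ω hjensen hsub hpull
  rw [hsub, Pi.sub_apply, hpull, bregmanDiv]
  simp only [Pi.add_apply, Pi.mul_apply, Pi.sub_apply, Function.comp_apply] at hjensen ⊢
  linarith

end

theorem conditional_jensen_bregman_1d_general
    {Ω : Type*} [m0 : MeasurableSpace Ω] (μ : Measure Ω) [IsProbabilityMeasure μ]
    {d k : ℕ}
    (X : Ω → (Fin d → ℝ)) (Y : Ω → Fin k) (hX : Measurable X) (hY : Measurable Y)
    (g : (Fin d → ℝ) → (Fin k → ℝ)) (hg : Measurable g)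
    (hgs : ∀ x, g x ∈ stdSimplex ℝ (Fin k))
    (c : (Fin k → ℝ) → Fin k) (h : (Fin k → ℝ) → ℝ)
    (hh : ∀ z, h z = z (c z))
    (hcmeas : Measurable[MeasurableSpace.comap (fun ω => g (X ω)) inferInstance]
      (fun ω => c (g (X ω))))
    (hσ : MeasurableSpace.comap (fun ω => h (g (X ω))) inferInstance ≤
          MeasurableSpace.comap (fun ω => g (X ω)) inferInstance)
    (ϕ : ℝ → ℝ) (Dϕ : ℝ → ℝ)
    (hϕconv : ConvexOn ℝ (Set.Icc 0 1) ϕ)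
    (hDϕ : ∀ y, HasDerivAt ϕ (Dϕ y) y)
    (dϕ : ℝ → ℝ → ℝ)
    (hdϕ : ∀ p q, dϕ p q = ϕ p - ϕ q - Dϕ q * (p - q)) :
    ∀ᵐ ω ∂μ,
      dϕ ((μ[(fun ω' => if Y ω' = c (g (X ω')) then (1 : ℝ) else 0) |
            MeasurableSpace.comap (fun ω' => h (g (X ω'))) inferInstance]) ω)
          (h (g (X ω)))
        ≤ (μ[(fun ω' =>
              dϕ ((μ[(fun ω'' => if Y ω'' = c (g (X ω'')) then (1 : ℝ) else 0) |
                    MeasurableSpace.comap (fun ω'' => g (X ω'')) inferInstance]) ω')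
                (h (g (X ω')))) |
            MeasurableSpace.comap (fun ω' => h (g (X ω'))) inferInstance]) ω := by
  obtain rfl : dϕ = bregmanDiv ϕ Dϕ := funext fun p => funext (hdϕ p)
  set mG := MeasurableSpace.comap (fun ω => g (X ω)) inferInstance
  set mH := MeasurableSpace.comap (fun ω => h (g (X ω))) inferInstance
  have hmG : mG ≤ m0 := (hg.comp hX).comap_le
  set F : Ω → ℝ := fun ω => if Y ω = c (g (X ω)) then 1 else 0
  have hFm : Measurable[m0] F :=
    .ite (measurableSet_eq_fun hY (hcmeas.mono hmG le_rfl)) measurable_const measurable_const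
  have hF01 : ∀ ω, F ω ∈ Icc (0 : ℝ) 1 := fun ω => by
    by_cases hω : Y ω = c (g (X ω)) <;> simp [F, hω]
  have hF : Integrable F μ := integrable_comp_of_ae_mem_isCompact continuous_id isCompact_Icc
    hFm.aestronglyMeasurable (ae_of_all μ hF01)
  have hZ01 : ∀ᵐ ω ∂μ, μ[F | mG] ω ∈ Icc 0 1 :=
    (convex_Icc (0 : ℝ) 1).condExp_mem hmG hF isClosed_Icc (ae_of_all μ hF01)
  have hH : StronglyMeasurable[mH] fun ω => h (g (X ω)) :=
    (comap_measurable _).stronglyMeasurable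
  have hH01 : ∀ ω, h (g (X ω)) ∈ Icc 0 1 := fun ω =>
    hh (g (X ω)) ▸ mem_Icc_of_mem_stdSimplex (hgs (X ω)) _
  filter_upwards [hϕconv.ae_bregmanDiv_condExp_le (hσ.trans hmG) hDϕ integrable_condExp hZ01
    hH (ae_of_all μ hH01), condExp_condExp_of_le (f := F) hσ hmG] with ω hle htower
  rwa [htower] at hle

/-- **Conditional Jensen step for 1-D Bregman divergences.** For a C¹ convex `ϕ : [0,1] → ℝ`,
with `σ(h(X)) ⊆ σ(g(X))` (both being measurable functions of the predictor output), almost surely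
`E[d_ϕ(E[𝟙_{Y=c(X)} | g(X)], h(X)) | h(X)] ≥ d_ϕ(E[𝟙_{Y=c(X)} | h(X)], h(X))`. -/
theorem conditional_jensen_bregman_1d
    {Ω : Type*} [m0 : MeasurableSpace Ω] (μ : Measure Ω) [IsProbabilityMeasure μ]
    {d k : ℕ}
    (X : Ω → (Fin d → ℝ)) (Y : Ω → Fin k) (hX : Measurable X) (hY : Measurable Y)
    (g : (Fin d → ℝ) → (Fin k → ℝ)) (hg : Measurable g)
    (hgs : ∀ x, g x ∈ stdSimplex ℝ (Fin k))
    (c : (Fin k → ℝ) → Fin k) (h : (Fin k → ℝ) → ℝ)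
    (hc : ∀ (z : Fin k → ℝ) (i : Fin k), z i ≤ z (c z)) (hh : ∀ z, h z = z (c z))
    (hcmeas : Measurable[MeasurableSpace.comap (fun ω => g (X ω)) inferInstance]
      (fun ω => c (g (X ω))))
    (hσ : MeasurableSpace.comap (fun ω => h (g (X ω))) inferInstance ≤
          MeasurableSpace.comap (fun ω => g (X ω)) inferInstance)
    (ϕ : ℝ → ℝ) (Dϕ : ℝ → ℝ)
    (hϕC1 : ContDiff ℝ 1 ϕ)
    (hϕconv : ConvexOn ℝ (Set.Icc 0 1) ϕ)
    (hDϕ : ∀ y, HasDerivAt ϕ (Dϕ y) y)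
    (dϕ : ℝ → ℝ → ℝ)
    (hdϕ : ∀ p q, dϕ p q = ϕ p - ϕ q - Dϕ q * (p - q)) :
    ∀ᵐ ω ∂μ,
      dϕ ((μ[(fun ω' => if Y ω' = c (g (X ω')) then (1 : ℝ) else 0) |
            MeasurableSpace.comap (fun ω' => h (g (X ω'))) inferInstance]) ω)
          (h (g (X ω)))
        ≤ (μ[(fun ω' =>
              dϕ ((μ[(fun ω'' => if Y ω'' = c (g (X ω'')) then (1 : ℝ) else 0) |
                    MeasurableSpace.comap (fun ω'' => g (X ω'')) inferInstance]) ω')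
                (h (g (X ω')))) |
            MeasurableSpace.comap (fun ω' => h (g (X ω'))) inferInstance]) ω :=
  conditional_jensen_bregman_1d_general (m0 := m0) μ X Y hX hY g hg hgs c h hh hcmeas hσ ϕ Dϕ hϕconv
    hDϕ dϕ hdϕ
end

section
/- Decomposition with grouping loss: for a Bregman divergence d_φ and binary classification with Y ∈ {0,1}, g: ℝ^d → [0,1], writing C = E[Y | g(X)] and Q = E[Y | X], it holds that E[d_φ(Y, g(X))] = E[d_φ(Y, Q)] + E[d_φ(Q, C)] + E[d_φ(C, g(X))]. -/
open MeasureTheory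

private lemma integral_mul_condexp' {Ω : Type*} [m0 : MeasurableSpace Ω] (μ : Measure Ω)
    [IsProbabilityMeasure μ] {m : MeasurableSpace Ω} (hm : m ≤ m0) {h f : Ω → ℝ}
    (hh : StronglyMeasurable[m] h) {c : ℝ} (hb : ∀ᵐ ω ∂μ, ‖h ω‖ ≤ c)
    (hf : Integrable f μ) :
    ∫ ω, h ω * f ω ∂μ = ∫ ω, h ω * (μ[f|m]) ω ∂μ := by
  haveI : SigmaFinite (μ.trim hm) := inferInstance
  have h1 : Integrable (fun ω => h ω * f ω) μ :=
    hf.bdd_mul ((hh.mono hm).aestronglyMeasurable) hb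
  calc ∫ ω, h ω * f ω ∂μ = ∫ ω, (μ[(fun ω => h ω * f ω)|m]) ω ∂μ :=
        (integral_condExp hm (f := fun ω => h ω * f ω)).symm
    _ = ∫ ω, h ω * (μ[f|m]) ω ∂μ := by
        refine integral_congr_ae ?_
        have := condExp_stronglyMeasurable_mul_of_bound hm (μ := μ) hh hf c hb
        filter_upwards [this] with ω hω using hω

/-- **Decomposition with grouping loss.** For a Bregman divergence `d_φ` (of a C¹ strictly convex
`φ : [0,1] → ℝ`, with derivative `Dφ`) and binary classification with `Y ∈ {0,1}`,
`g : ℝ^d → [0,1]`, writing `C = E[Y | g(X)]` and `Q = E[Y | X]`, it holds that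
`E[d_φ(Y, g(X))] = E[d_φ(Y, Q)] + E[d_φ(Q, C)] + E[d_φ(C, g(X))]`, the three terms being the
irreducible loss, the grouping loss and the calibration error. -/
theorem grouping_loss_decomposition
    {Ω : Type*} [m0 : MeasurableSpace Ω] (μ : Measure Ω) [IsProbabilityMeasure μ]
    {d : ℕ}
    (X : Ω → (Fin d → ℝ)) (Y : Ω → ℝ)
    (hX : Measurable X) (hY : Measurable Y)
    (hY01 : ∀ ω, Y ω = 0 ∨ Y ω = 1)
    (g : (Fin d → ℝ) → ℝ) (hg : Measurable g)
    (hg01 : ∀ x, g x ∈ Set.Icc (0 : ℝ) 1)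
    (φ : ℝ → ℝ) (Dφ : ℝ → ℝ)
    (hφC1 : ContDiff ℝ 1 φ)
    (hφconv : StrictConvexOn ℝ (Set.Icc 0 1) φ)
    (hDφ : ∀ y, HasDerivAt φ (Dφ y) y)
    (dφ : ℝ → ℝ → ℝ)
    (hdφ : ∀ x y, dφ x y = φ x - φ y - Dφ y * (x - y))
    (Q C : Ω → ℝ)
    (hQ : Q =ᵐ[μ] μ[Y | MeasurableSpace.comap X inferInstance])
    (hC : C =ᵐ[μ] μ[Y | MeasurableSpace.comap (fun ω => g (X ω)) inferInstance]) :
    ∫ ω, dφ (Y ω) (g (X ω)) ∂μ =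
      (∫ ω, dφ (Y ω) (Q ω) ∂μ) + (∫ ω, dφ (Q ω) (C ω) ∂μ)
        + ∫ ω, dφ (C ω) (g (X ω)) ∂μ := by
  -- setup
  set mX : MeasurableSpace Ω := MeasurableSpace.comap X inferInstance with hmXdef
  set mG : MeasurableSpace Ω := MeasurableSpace.comap (fun ω => g (X ω)) inferInstance
    with hmGdef
  have hmX : mX ≤ m0 := hX.comap_le
  have hgX : Measurable[m0] fun ω => g (X ω) := hg.comp hX
  have hmG : mG ≤ m0 := hgX.comap_le
  have hmGX : mG ≤ mX := by
    rw [hmGdef, hmXdef, show (fun ω => g (X ω)) = g ∘ X from rfl,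
      ← MeasurableSpace.comap_comp]
    exact MeasurableSpace.comap_mono hg.comap_le
  set Q' : Ω → ℝ := μ[Y|mX] with hQ'def
  set C' : Ω → ℝ := μ[Y|mG] with hC'def
  -- continuity of Dφ and bounds on [0,1]
  have hDeq : Dφ = deriv φ := funext fun y => ((hDφ y).deriv).symm
  have hDcont : Continuous Dφ := hDeq ▸ hφC1.continuous_deriv le_rfl
  obtain ⟨Mφ, hMφ⟩ := isCompact_Icc.exists_bound_of_continuousOn
    (hφC1.continuous.continuousOn : ContinuousOn φ (Set.Icc (0:ℝ) 1))
  obtain ⟨MD, hMD⟩ := isCompact_Icc.exists_bound_of_continuousOn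
    (hDcont.continuousOn : ContinuousOn Dφ (Set.Icc (0:ℝ) 1))
  have hMDnn : 0 ≤ MD := le_trans (norm_nonneg _) (hMD 0 ⟨le_rfl, zero_le_one⟩)
  -- a.e. ranges
  have hYmem : ∀ ω, Y ω ∈ Set.Icc (0:ℝ) 1 := fun ω => by
    rcases hY01 ω with h | h <;> rw [h] <;> constructor <;> norm_num
  have hYint : Integrable Y μ := by
    refine (integrable_const (1:ℝ)).mono' hY.aestronglyMeasurable ?_
    refine Filter.Eventually.of_forall fun ω => ?_
    have := hYmem ω
    rw [Real.norm_eq_abs, abs_le]; exact ⟨by linarith [this.1], this.2⟩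
  have hcondmem : ∀ (m : MeasurableSpace Ω), m ≤ m0 →
      ∀ᵐ ω ∂μ, (μ[Y|m]) ω ∈ Set.Icc (0:ℝ) 1 := by
    intro m hm
    haveI : SigmaFinite (μ.trim hm) := inferInstance
    have h0 : 0 ≤ᵐ[μ] μ[Y|m] :=
      condExp_nonneg (Filter.Eventually.of_forall fun ω => (hYmem ω).1)
    have h1 : μ[Y|m] ≤ᵐ[μ] μ[(fun _ => (1:ℝ))|m] :=
      condExp_mono hYint (integrable_const 1)
        (Filter.Eventually.of_forall fun ω => (hYmem ω).2)
    have hc : μ[(fun _ => (1:ℝ))|m] = fun _ => (1:ℝ) := condExp_const hm 1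
    filter_upwards [h0, h1] with ω hω0 hω1
    exact ⟨hω0, by simpa [hc] using hω1⟩
  have hQ'mem : ∀ᵐ ω ∂μ, Q' ω ∈ Set.Icc (0:ℝ) 1 := hcondmem mX hmX
  have hC'mem : ∀ᵐ ω ∂μ, C' ω ∈ Set.Icc (0:ℝ) 1 := hcondmem mG hmG
  have hQmem : ∀ᵐ ω ∂μ, Q ω ∈ Set.Icc (0:ℝ) 1 := by
    filter_upwards [hQ, hQ'mem] with ω h1 h2; rw [h1]; exact h2
  have hCmem : ∀ᵐ ω ∂μ, C ω ∈ Set.Icc (0:ℝ) 1 := by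
    filter_upwards [hC, hC'mem] with ω h1 h2; rw [h1]; exact h2
  have hQ'int : Integrable Q' μ := integrable_condExp
  have hC'int : Integrable C' μ := integrable_condExp
  have hQint : Integrable Q μ := hQ'int.congr hQ.symm
  have hCint : Integrable C μ := hC'int.congr hC.symm
  have hQm : AEStronglyMeasurable[m0] Q μ :=
    ((stronglyMeasurable_condExp.mono hmX).aestronglyMeasurable).congr hQ.symm
  have hCm : AEStronglyMeasurable[m0] C μ :=
    ((stronglyMeasurable_condExp.mono hmG).aestronglyMeasurable).congr hC.symm
  -- integrability of dφ-type integrands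
  have key_int : ∀ a b : Ω → ℝ, AEStronglyMeasurable[m0] a μ → AEStronglyMeasurable[m0] b μ →
      (∀ᵐ ω ∂μ, a ω ∈ Set.Icc (0:ℝ) 1) → (∀ᵐ ω ∂μ, b ω ∈ Set.Icc (0:ℝ) 1) →
      Integrable (fun ω => dφ (a ω) (b ω)) μ := by
    intro a b ha hb ha1 hb1
    simp_rw [hdφ]
    have hm : AEStronglyMeasurable[m0] (fun ω => φ (a ω) - φ (b ω) - Dφ (b ω) * (a ω - b ω)) μ :=
      ((hφC1.continuous.comp_aestronglyMeasurable ha).sub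
        (hφC1.continuous.comp_aestronglyMeasurable hb)).sub
        ((hDcont.comp_aestronglyMeasurable hb).mul (ha.sub hb))
    refine (integrable_const (Mφ + Mφ + MD * 2)).mono' hm ?_
    filter_upwards [ha1, hb1] with ω h1 h2
    have hna : ‖a ω‖ ≤ 1 := by rw [Real.norm_eq_abs, abs_le]; exact ⟨by linarith [h1.1], h1.2⟩
    have hnb : ‖b ω‖ ≤ 1 := by rw [Real.norm_eq_abs, abs_le]; exact ⟨by linarith [h2.1], h2.2⟩
    calc ‖φ (a ω) - φ (b ω) - Dφ (b ω) * (a ω - b ω)‖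
        ≤ ‖φ (a ω) - φ (b ω)‖ + ‖Dφ (b ω) * (a ω - b ω)‖ := norm_sub_le _ _
      _ ≤ (‖φ (a ω)‖ + ‖φ (b ω)‖) + ‖Dφ (b ω)‖ * ‖a ω - b ω‖ := by
          rw [norm_mul]; exact add_le_add_left (norm_sub_le _ _) _
      _ ≤ (Mφ + Mφ) + MD * 2 := by
          refine add_le_add (add_le_add (hMφ _ h1) (hMφ _ h2)) ?_
          refine mul_le_mul (hMD _ h2) ?_ (norm_nonneg _) hMDnn
          calc ‖a ω - b ω‖ ≤ ‖a ω‖ + ‖b ω‖ := norm_sub_le _ _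
            _ ≤ 2 := by linarith
  have int1 : Integrable (fun ω => dφ (Y ω) (g (X ω))) μ :=
    key_int _ _ hY.aestronglyMeasurable hgX.aestronglyMeasurable
      (Filter.Eventually.of_forall hYmem) (Filter.Eventually.of_forall fun ω => hg01 _)
  have int2 : Integrable (fun ω => dφ (Y ω) (Q ω)) μ :=
    key_int _ _ hY.aestronglyMeasurable hQm (Filter.Eventually.of_forall hYmem) hQmem
  have int3 : Integrable (fun ω => dφ (Q ω) (C ω)) μ := key_int _ _ hQm hCm hQmem hCmem
  have int4 : Integrable (fun ω => dφ (C ω) (g (X ω))) μ :=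
    key_int _ _ hCm hgX.aestronglyMeasurable hCmem
      (Filter.Eventually.of_forall fun ω => hg01 _)
  -- the three correction terms
  -- bounded m-strongly-measurable multipliers
  have hgXmG : StronglyMeasurable[mG] fun ω => g (X ω) :=
    (Measurable.of_comap_le le_rfl).stronglyMeasurable
  have hDgX : StronglyMeasurable[mG] fun ω => Dφ (g (X ω)) :=
    hDcont.comp_stronglyMeasurable hgXmG
  have hDgX_bd : ∀ᵐ ω ∂μ, ‖Dφ (g (X ω))‖ ≤ MD :=
    Filter.Eventually.of_forall fun ω => hMD _ (hg01 _)
  have hDQ' : StronglyMeasurable[mX] fun ω => Dφ (Q' ω) :=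
    hDcont.comp_stronglyMeasurable stronglyMeasurable_condExp
  have hDQ'_bd : ∀ᵐ ω ∂μ, ‖Dφ (Q' ω)‖ ≤ MD := by
    filter_upwards [hQ'mem] with ω hω using hMD _ hω
  have hDC' : StronglyMeasurable[mG] fun ω => Dφ (C' ω) :=
    hDcont.comp_stronglyMeasurable stronglyMeasurable_condExp
  have hDC'_bd : ∀ᵐ ω ∂μ, ‖Dφ (C' ω)‖ ≤ MD := by
    filter_upwards [hC'mem] with ω hω using hMD _ hω
  -- products are integrable
  have pint : ∀ (h f : Ω → ℝ), AEStronglyMeasurable[m0] h μ → (∀ᵐ ω ∂μ, ‖h ω‖ ≤ MD) →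
      Integrable f μ → Integrable (fun ω => h ω * f ω) μ :=
    fun h f hh hb hf => hf.bdd_mul hh hb
  -- Term 1 : ∫ Dφ(g(X)) * (C - Y) = 0
  have T1 : ∫ ω, Dφ (g (X ω)) * (C ω - Y ω) ∂μ = 0 := by
    have e1 : ∫ ω, Dφ (g (X ω)) * (C ω - Y ω) ∂μ
        = ∫ ω, Dφ (g (X ω)) * (C' ω - Y ω) ∂μ := by
      refine integral_congr_ae ?_
      filter_upwards [hC] with ω hω; rw [hω]
    rw [e1]
    have hY2C : ∫ ω, Dφ (g (X ω)) * Y ω ∂μ = ∫ ω, Dφ (g (X ω)) * C' ω ∂μ :=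
      integral_mul_condexp' (m0 := m0) μ hmG hDgX hDgX_bd hYint
    have isub : ∫ ω, Dφ (g (X ω)) * (C' ω - Y ω) ∂μ
        = (∫ ω, Dφ (g (X ω)) * C' ω ∂μ) - ∫ ω, Dφ (g (X ω)) * Y ω ∂μ := by
      simp_rw [mul_sub]
      exact integral_sub (pint _ _ ((hDgX.mono hmG).aestronglyMeasurable) hDgX_bd hC'int)
        (pint _ _ ((hDgX.mono hmG).aestronglyMeasurable) hDgX_bd hYint)
    rw [isub, hY2C, sub_self]
  -- Term 2 : ∫ Dφ(Q) * (Y - Q) = 0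
  have T2 : ∫ ω, Dφ (Q ω) * (Y ω - Q ω) ∂μ = 0 := by
    have e1 : ∫ ω, Dφ (Q ω) * (Y ω - Q ω) ∂μ
        = ∫ ω, Dφ (Q' ω) * (Y ω - Q' ω) ∂μ := by
      refine integral_congr_ae ?_
      filter_upwards [hQ] with ω hω; rw [hω]
    rw [e1]
    have hY2Q : ∫ ω, Dφ (Q' ω) * Y ω ∂μ = ∫ ω, Dφ (Q' ω) * Q' ω ∂μ :=
      integral_mul_condexp' (m0 := m0) μ hmX hDQ' hDQ'_bd hYint
    have isub : ∫ ω, Dφ (Q' ω) * (Y ω - Q' ω) ∂μ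
        = (∫ ω, Dφ (Q' ω) * Y ω ∂μ) - ∫ ω, Dφ (Q' ω) * Q' ω ∂μ := by
      simp_rw [mul_sub]
      exact integral_sub (pint _ _ ((hDQ'.mono hmX).aestronglyMeasurable) hDQ'_bd hYint)
        (pint _ _ ((hDQ'.mono hmX).aestronglyMeasurable) hDQ'_bd hQ'int)
    rw [isub, hY2Q, sub_self]
  -- Term 3 : ∫ Dφ(C) * (Q - C) = 0
  have T3 : ∫ ω, Dφ (C ω) * (Q ω - C ω) ∂μ = 0 := by
    have e1 : ∫ ω, Dφ (C ω) * (Q ω - C ω) ∂μ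
        = ∫ ω, Dφ (C' ω) * (Q' ω - C' ω) ∂μ := by
      refine integral_congr_ae ?_
      filter_upwards [hQ, hC] with ω h1 h2; rw [h1, h2]
    rw [e1]
    haveI : SigmaFinite (μ.trim hmX) := inferInstance
    have tower : μ[Q'|mG] =ᵐ[μ] C' := condExp_condExp_of_le hmGX hmX
    have hQ2C : ∫ ω, Dφ (C' ω) * Q' ω ∂μ = ∫ ω, Dφ (C' ω) * C' ω ∂μ := by
      rw [integral_mul_condexp' (m0 := m0) μ hmG hDC' hDC'_bd hQ'int]
      refine integral_congr_ae ?_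
      filter_upwards [tower] with ω hω; rw [hω]
    have isub : ∫ ω, Dφ (C' ω) * (Q' ω - C' ω) ∂μ
        = (∫ ω, Dφ (C' ω) * Q' ω ∂μ) - ∫ ω, Dφ (C' ω) * C' ω ∂μ := by
      simp_rw [mul_sub]
      exact integral_sub (pint _ _ ((hDC'.mono hmG).aestronglyMeasurable) hDC'_bd hQ'int)
        (pint _ _ ((hDC'.mono hmG).aestronglyMeasurable) hDC'_bd hC'int)
    rw [isub, hQ2C, sub_self]
  -- pointwise decomposition
  have hpt : ∀ ω, dφ (Y ω) (g (X ω)) =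
      dφ (Y ω) (Q ω) + dφ (Q ω) (C ω) + dφ (C ω) (g (X ω))
        + (Dφ (g (X ω)) * (C ω - Y ω) + Dφ (Q ω) * (Y ω - Q ω)
          + Dφ (C ω) * (Q ω - C ω)) := by
    intro ω; simp only [hdφ]; ring
  -- integrability of correction terms
  have intT1 : Integrable (fun ω => Dφ (g (X ω)) * (C ω - Y ω)) μ :=
    pint _ _ ((hDgX.mono hmG).aestronglyMeasurable) hDgX_bd (hCint.sub hYint)
  have intT2 : Integrable (fun ω => Dφ (Q ω) * (Y ω - Q ω)) μ := by
    refine pint _ _ ?_ ?_ (hYint.sub hQint)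
    · exact ((hDQ'.mono hmX).aestronglyMeasurable).congr (by
        filter_upwards [hQ] with ω hω; rw [hω])
    · filter_upwards [hDQ'_bd, hQ] with ω h1 h2; rw [h2]; exact h1
  have intT2' : Integrable (fun ω => Dφ (C ω) * (Q ω - C ω)) μ := by
    refine pint _ _ ?_ ?_ (hQint.sub hCint)
    · exact ((hDC'.mono hmG).aestronglyMeasurable).congr (by
        filter_upwards [hC] with ω hω; rw [hω])
    · filter_upwards [hDC'_bd, hC] with ω h1 h2; rw [h2]; exact h1
  calc ∫ ω, dφ (Y ω) (g (X ω)) ∂μ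
      = ∫ ω, (dφ (Y ω) (Q ω) + dφ (Q ω) (C ω) + dφ (C ω) (g (X ω))
        + (Dφ (g (X ω)) * (C ω - Y ω) + Dφ (Q ω) * (Y ω - Q ω)
          + Dφ (C ω) * (Q ω - C ω))) ∂μ := by
        exact integral_congr_ae (Filter.Eventually.of_forall hpt)
    _ = (∫ ω, dφ (Y ω) (Q ω) ∂μ) + (∫ ω, dφ (Q ω) (C ω) ∂μ)
        + (∫ ω, dφ (C ω) (g (X ω)) ∂μ)
        + ((∫ ω, Dφ (g (X ω)) * (C ω - Y ω) ∂μ)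
          + (∫ ω, Dφ (Q ω) * (Y ω - Q ω) ∂μ)
          + (∫ ω, Dφ (C ω) * (Q ω - C ω) ∂μ)) := by
        have I23 : Integrable (fun ω => dφ (Y ω) (Q ω) + dφ (Q ω) (C ω)) μ := int2.add int3
        have I234 : Integrable (fun ω => dφ (Y ω) (Q ω) + dφ (Q ω) (C ω)
            + dφ (C ω) (g (X ω))) μ := I23.add int4
        have J12 : Integrable (fun ω => Dφ (g (X ω)) * (C ω - Y ω)
            + Dφ (Q ω) * (Y ω - Q ω)) μ := intT1.add intT2
        have J123 : Integrable (fun ω => Dφ (g (X ω)) * (C ω - Y ω)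
            + Dφ (Q ω) * (Y ω - Q ω) + Dφ (C ω) * (Q ω - C ω)) μ := J12.add intT2'
        rw [integral_add I234 J123, integral_add I23 int4, integral_add int2 int3,
          integral_add J12 intT2', integral_add intT1 intT2]
    _ = (∫ ω, dφ (Y ω) (Q ω) ∂μ) + (∫ ω, dφ (Q ω) (C ω) ∂μ)
        + ∫ ω, dφ (C ω) (g (X ω)) ∂μ := by rw [T1, T2, T3]; ring
end
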